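/- Let Ω ⊂ ℝ² be the interior of the trapezoid with vertices (2,0), (3,1), (−2,1) and (−1,0). Let f be the geodesic line of (Ω, h_Ω) whose image is Ω ∩ {y = x}, with f(0) = (1/2, 1/2) and lim_{t→+∞} f(t) = (0, 0), and let g be the geodesic line whose image is Ω ∩ {y = −x + 1}, with g(0) = (1/2, 1/2) and lim_{t→+∞} g(t) = (1, 0). Then for every T ∈ ℝ, the function t ↦ h_Ω(f(t), g(t)) is not convex on [T, +∞). -/

import Mathlib

open Real Filter Set Metric

/- The Hilbert distance on a (bounded open convex) domain `Ω` in Euclidean space: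
for `p ≠ q` it is `log ((‖p' - q‖ * ‖q' - p‖) / (‖p' - p‖ * ‖q' - q‖))` where `p', q'`
are the two boundary points of the chord through `p` and `q`, labelled so that `p` lies
strictly between `p'` and `q`, and `q` lies strictly between `p` and `q'`. -/

open Classical in
noncomputable def hilbertDist {n : ℕ} (Ω : Set (EuclideanSpace ℝ (Fin n)))
    (p q : EuclideanSpace ℝ (Fin n)) : ℝ :=
  if _h : p = q then 0
  else Classical.epsilon fun d : ℝ =>
    ∃ p' q' : EuclideanSpace ℝ (Fin n), p' ∈ frontier Ω ∧ q' ∈ frontier Ω ∧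
      p ∈ openSegment ℝ p' q ∧ q ∈ openSegment ℝ p q' ∧
      d = Real.log ((‖p' - q‖ * ‖q' - p‖) / (‖p' - p‖ * ‖q' - q‖))

/-- A geodesic line of `(Ω, hilbertDist Ω)`: a map `f : ℝ → Ω` whose image lies on a
Euclidean line and which satisfies `hilbertDist Ω (f s) (f t) = |s - t|`. -/
def IsGeodesicLine {n : ℕ} (Ω : Set (EuclideanSpace ℝ (Fin n)))
    (f : ℝ → EuclideanSpace ℝ (Fin n)) : Prop :=
  (∀ t, f t ∈ Ω) ∧ Collinear ℝ (Set.range f) ∧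
    ∀ s t : ℝ, hilbertDist Ω (f s) (f t) = |s - t|

/-- The point `(a, b)` of the Euclidean plane. -/
noncomputable def pt (a b : ℝ) : EuclideanSpace ℝ (Fin 2) :=
  (EuclideanSpace.equiv (Fin 2) ℝ).symm ![a, b]

open Topology
open AffineMap (lineMap)

/-!
Along a chord with boundary endpoints `e₁, e₂` of a convex open set, the Hilbert distance
between `lineMap e₁ e₂ a` and `lineMap e₁ e₂ b` is `|logit a - logit b|`; the boundary points
in the definition are unique because the set is convex and open. So a geodesic line on a chord
is an isometry of `ℝ` in the logit coordinate, and `f 0 = g 0 = (1/2, 1/2)` together with the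
limits at `+∞` force `f t = (w, w)` and `g t = (1 - w, w)` with `w = (1 + eᵗ)⁻¹`. Both points
lie on the horizontal chord from `(-1 - w, w)` to `(2 + w, w)`, which gives
`h(f t, g t) = 2 log (2 / (1 + 2w))` for `t > 0`: strictly increasing and bounded by `2 log 2`.
A function convex on `[T, ∞)` that increases somewhere tends to `+∞`, a contradiction.
-/

noncomputable def logit (a : ℝ) : ℝ := log (a / (1 - a))

lemma logit_one_sub (a : ℝ) : logit (1 - a) = -logit a := by
  rw [logit, logit, sub_sub_cancel, ← inv_div, log_inv]

lemma logit_lt_logit {a b : ℝ} (ha : 0 < a) (hab : a < b) (hb : b < 1) : logit a < logit b := by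
  have h1a : 0 < 1 - a := by linarith
  have h1b : 0 < 1 - b := by linarith
  refine log_lt_log (by positivity) ?_
  rw [div_lt_div_iff₀ h1a h1b]
  nlinarith

lemma inv_one_add_exp_neg_logit {a : ℝ} (ha : 0 < a) (ha' : a < 1) :
    (1 + exp (-logit a))⁻¹ = a := by
  have h1a : 0 < 1 - a := by linarith
  rw [logit, ← log_inv, exp_log (by positivity)]
  field_simp
  ring

lemma strictAnti_inv_one_add_exp : StrictAnti fun t : ℝ => (1 + exp t)⁻¹ := fun _ _ h =>
  inv_strictAnti₀ (by positivity) (by linarith [exp_lt_exp.2 h])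

lemma strictAntiOn_two_mul_log_two_div :
    StrictAntiOn (fun s : ℝ => 2 * log (2 / (1 + 2 * s))) (Ici 0) := fun x hx y hy h => by
  simp only [mem_Ici] at hx hy
  dsimp only
  gcongr

theorem eq_id_or_eq_neg_of_abs_sub_eq {u : ℝ → ℝ} (hu : ∀ s t, |u s - u t| = |s - t|)
    (h0 : u 0 = 0) : u = id ∨ u = Neg.neg := by
  have hsq : ∀ s t, (u s - u t) ^ 2 = (s - t) ^ 2 := fun s t => by rw [← sq_abs, hu, sq_abs]
  -- polarization: the three squared distances between `0`, `1` and `t` determine `u t * u 1`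
  have hmul : ∀ t, u t * u 1 = t := fun t => by
    have h₁ := hsq t 0
    have h₂ := hsq 1 0
    have h₃ := hsq t 1
    rw [h0] at h₁ h₂
    linear_combination (h₁ + h₂ - h₃) / 2
  rcases mul_self_eq_one_iff.1 (hmul 1) with h | h
  · exact Or.inl (funext fun t => by simpa [h] using hmul t)
  · exact Or.inr (funext fun t => by simpa [h] using congrArg Neg.neg (hmul t))

theorem ConvexOn.tendsto_atTop_of_lt {f : ℝ → ℝ} {T a b : ℝ} (hf : ConvexOn ℝ (Ici T) f)
    (ha : T ≤ a) (hab : a < b) (hfab : f a < f b) : Tendsto f atTop atTop := by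
  have hc : 0 < (f b - f a) / (b - a) := div_pos (sub_pos.2 hfab) (sub_pos.2 hab)
  refine tendsto_atTop_mono' _ ?_ (tendsto_atTop_add_const_left _ (f b)
    ((tendsto_atTop_add_const_right _ (-b) tendsto_id).const_mul_atTop hc))
  filter_upwards [eventually_gt_atTop b] with z hz
  have := hf.slope_mono_adjacent (mem_Ici.2 ha) (mem_Ici.2 (by linarith)) hab hz
  rw [le_div_iff₀ (sub_pos.2 hz)] at this
  simp only [id]
  linarith

section ConvexOpen

variable {E : Type*} [NormedAddCommGroup E] [NormedSpace ℝ E] {Ω : Set E}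

theorem Convex.lineMap_mem_of_lt_of_mem_frontier (hc : Convex ℝ Ω) (ho : IsOpen Ω) {x y : E}
    (hx : x ∈ Ω) {r₁ r₂ : ℝ} (h₁ : 0 ≤ r₁) (h₁₂ : r₁ < r₂) (h₂ : lineMap x y r₂ ∈ frontier Ω) :
    lineMap x y r₁ ∈ Ω := by
  have hr₂ : 0 < r₂ := h₁.trans_lt h₁₂
  have hr : r₁ / r₂ < 1 := (div_lt_one hr₂).2 h₁₂
  rw [← ho.interior_eq, ← div_mul_cancel₀ r₁ hr₂.ne', ← AffineMap.lineMap_lineMap_right,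
    AffineMap.lineMap_apply_module]
  exact hc.combo_interior_closure_mem_interior (ho.interior_eq.symm ▸ hx)
    (frontier_subset_closure h₂) (by linarith) (by positivity) (by ring)

theorem Convex.lineMap_eq_of_mem_frontier (hc : Convex ℝ Ω) (ho : IsOpen Ω) {x y : E}
    (hx : x ∈ Ω) {r₁ r₂ : ℝ} (h₁ : 0 ≤ r₁) (h₂ : 0 ≤ r₂) (hb₁ : lineMap x y r₁ ∈ frontier Ω)
    (hb₂ : lineMap x y r₂ ∈ frontier Ω) : lineMap x y r₁ = lineMap x y r₂ := by
  have hout : ∀ p ∈ frontier Ω, p ∉ Ω := fun p hp => (ho.frontier_eq ▸ hp).2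
  rcases lt_trichotomy r₁ r₂ with h | rfl | h
  · exact (hout _ hb₁ (hc.lineMap_mem_of_lt_of_mem_frontier ho hx h₁ h hb₂)).elim
  · rfl
  · exact (hout _ hb₂ (hc.lineMap_mem_of_lt_of_mem_frontier ho hx h₂ h hb₁)).elim

theorem Convex.eq_of_mem_frontier_of_mem_openSegment (hc : Convex ℝ Ω) (ho : IsOpen Ω)
    {p q b₁ b₂ : E} (hq : q ∈ Ω) (hb₁ : b₁ ∈ frontier Ω) (hb₂ : b₂ ∈ frontier Ω)
    (h₁ : p ∈ openSegment ℝ b₁ q) (h₂ : p ∈ openSegment ℝ b₂ q) : b₁ = b₂ := by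
  have ray : ∀ b ∈ frontier Ω, p ∈ openSegment ℝ b q → b ∈ lineMap q p '' Ioi (1 : ℝ) := by
    intro b hb hp
    have hbq : b ≠ q := fun h => (ho.frontier_eq ▸ hb).2 (h ▸ hq)
    rw [openSegment_eq_image_lineMap] at hp
    exact (sbtw_iff_mem_image_Ioo_and_ne.2 ⟨hp, hbq⟩).left_mem_image_Ioi
  obtain ⟨r₁, hr₁, rfl⟩ := ray b₁ hb₁ h₁
  obtain ⟨r₂, hr₂, rfl⟩ := ray b₂ hb₂ h₂
  exact hc.lineMap_eq_of_mem_frontier ho hq (by linarith [mem_Ioi.1 hr₁])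
    (by linarith [mem_Ioi.1 hr₂]) hb₁ hb₂

end ConvexOpen

section HilbertDist

variable {n : ℕ} {Ω : Set (EuclideanSpace ℝ (Fin n))}

theorem hilbertDist_self (p : EuclideanSpace ℝ (Fin n)) :
    hilbertDist Ω p p = 0 :=
  dif_pos rfl

theorem hilbertDist_eq_log (hc : Convex ℝ Ω) (ho : IsOpen Ω)
    {p q p' q' : EuclideanSpace ℝ (Fin n)} (hpq : p ≠ q) (hp : p ∈ Ω) (hq : q ∈ Ω)
    (hp' : p' ∈ frontier Ω) (hq' : q' ∈ frontier Ω)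
    (h₁ : p ∈ openSegment ℝ p' q) (h₂ : q ∈ openSegment ℝ p q') :
    hilbertDist Ω p q = log ((‖p' - q‖ * ‖q' - p‖) / (‖p' - p‖ * ‖q' - q‖)) := by
  rw [hilbertDist, dif_neg hpq]
  have epsilon_eq :
      ∀ {P : ℝ → Prop} {c : ℝ}, P c → (∀ d, P d → d = c) → Classical.epsilon P = c :=
    fun hPc hu => hu _ (Classical.epsilon_spec ⟨_, hPc⟩)
  refine epsilon_eq ⟨p', q', hp', hq', h₁, h₂, rfl⟩ ?_
  rintro d ⟨p'', q'', hp'', hq'', h₁', h₂', rfl⟩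
  rw [openSegment_symm] at h₂ h₂'
  rw [hc.eq_of_mem_frontier_of_mem_openSegment ho hq hp'' hp' h₁' h₁,
    hc.eq_of_mem_frontier_of_mem_openSegment ho hp hq'' hq' h₂' h₂]

theorem hilbertDist_lineMap_of_lt (hc : Convex ℝ Ω) (ho : IsOpen Ω)
    {e₁ e₂ : EuclideanSpace ℝ (Fin n)} (he₁ : e₁ ∈ frontier Ω) (he₂ : e₂ ∈ frontier Ω) {a b : ℝ}
    (ha₀ : 0 < a) (hab : a < b) (hb₁ : b < 1) (ha : lineMap e₁ e₂ a ∈ Ω)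
    (hb : lineMap e₁ e₂ b ∈ Ω) :
    hilbertDist Ω (lineMap e₁ e₂ a) (lineMap e₁ e₂ b) = logit b - logit a := by
  have he : e₁ ≠ e₂ := by
    rintro rfl
    rw [AffineMap.lineMap_same_apply] at ha
    exact (ho.frontier_eq ▸ he₁).2 ha
  have hd : 0 < dist e₁ e₂ := dist_pos.2 he
  have hb₀ : 0 < b := ha₀.trans hab
  have h1a : 0 < 1 - a := by linarith
  have h1b : 0 < 1 - b := by linarith
  have hpq : lineMap e₁ e₂ a ≠ lineMap e₁ e₂ b :=
    fun h => hab.ne (AffineMap.lineMap_injective ℝ he h)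
  have h₁ : lineMap e₁ e₂ a ∈ openSegment ℝ e₁ (lineMap e₁ e₂ b) := by
    rw [openSegment_eq_image_lineMap]
    refine ⟨a / b, ⟨by positivity, (div_lt_one hb₀).2 hab⟩, ?_⟩
    rw [AffineMap.lineMap_lineMap_right, div_mul_cancel₀ a hb₀.ne']
  have h₂ : lineMap e₁ e₂ b ∈ openSegment ℝ (lineMap e₁ e₂ a) e₂ := by
    rw [openSegment_eq_image_lineMap]
    refine ⟨(b - a) / (1 - a), ⟨div_pos (by linarith) h1a,
      (div_lt_one h1a).2 (by linarith)⟩, ?_⟩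
    rw [AffineMap.lineMap_lineMap_left]
    congr 1
    field_simp
    ring
  rw [hilbertDist_eq_log hc ho hpq ha hb he₁ he₂ h₁ h₂, ← dist_eq_norm, ← dist_eq_norm,
    ← dist_eq_norm, ← dist_eq_norm, dist_left_lineMap, dist_left_lineMap, dist_right_lineMap,
    dist_right_lineMap, logit, logit, ← log_div (by positivity) (by positivity)]
  congr 1
  simp only [Real.norm_eq_abs, abs_of_pos ha₀, abs_of_pos hb₀, abs_of_pos h1a, abs_of_pos h1b]
  field_simp

theorem hilbertDist_lineMap (hc : Convex ℝ Ω) (ho : IsOpen Ω)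
    {e₁ e₂ : EuclideanSpace ℝ (Fin n)} (he₁ : e₁ ∈ frontier Ω) (he₂ : e₂ ∈ frontier Ω) {a b : ℝ}
    (ha : a ∈ Ioo 0 1) (hb : b ∈ Ioo 0 1) (ha' : lineMap e₁ e₂ a ∈ Ω)
    (hb' : lineMap e₁ e₂ b ∈ Ω) :
    hilbertDist Ω (lineMap e₁ e₂ a) (lineMap e₁ e₂ b) = |logit a - logit b| := by
  obtain ⟨ha₀, ha₁⟩ := ha
  obtain ⟨hb₀, hb₁⟩ := hb
  rcases lt_trichotomy a b with h | rfl | h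
  · rw [hilbertDist_lineMap_of_lt hc ho he₁ he₂ ha₀ h hb₁ ha' hb', abs_sub_comm,
      abs_of_pos (sub_pos.2 (logit_lt_logit ha₀ h hb₁))]
  · rw [hilbertDist_self, sub_self, abs_zero]
  · rw [← AffineMap.lineMap_apply_one_sub e₂ e₁] at ha' hb' ⊢
    rw [← AffineMap.lineMap_apply_one_sub e₂ e₁ b,
      hilbertDist_lineMap_of_lt hc ho he₂ he₁ (by linarith) (by linarith) (by linarith) ha' hb',
      logit_one_sub, logit_one_sub, abs_of_pos (sub_pos.2 (logit_lt_logit hb₀ h ha₁))]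
    ring

theorem IsGeodesicLine.eq_inv_one_add_exp (hc : Convex ℝ Ω) (ho : IsOpen Ω)
    {e₁ e₂ : EuclideanSpace ℝ (Fin n)}
    (he₁ : e₁ ∈ frontier Ω) (he₂ : e₂ ∈ frontier Ω) {f : ℝ → EuclideanSpace ℝ (Fin n)}
    (hf : IsGeodesicLine Ω f) {σ : ℝ → ℝ} (hfσ : ∀ t, f t = lineMap e₁ e₂ (σ t))
    (hσ : ∀ t, σ t ∈ Ioo 0 1) (hσ₀ : σ 0 = 1 / 2) (hσlim : Tendsto σ atTop (𝓝 0)) (t : ℝ) :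
    σ t = (1 + exp t)⁻¹ := by
  have hu : ∀ s t, |logit (σ s) - logit (σ t)| = |s - t| := fun s t => by
    rw [← hf.2.2 s t, hfσ, hfσ,
      hilbertDist_lineMap hc ho he₁ he₂ (hσ s) (hσ t) (hfσ s ▸ hf.1 s) (hfσ t ▸ hf.1 t)]
  have hσ_eq : ∀ t, σ t = (1 + exp (-logit (σ t)))⁻¹ := fun t =>
    (inv_one_add_exp_neg_logit (hσ t).1 (hσ t).2).symm
  rcases eq_id_or_eq_neg_of_abs_sub_eq (u := logit ∘ σ) hu (by norm_num [hσ₀, logit]) with h | h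
  · have hlim : Tendsto (fun t => (1 + exp (-t))⁻¹) atTop (𝓝 1) := by
      simpa using (tendsto_exp_neg_atTop_nhds_zero.const_add 1).inv₀ (by norm_num)
    refine absurd (tendsto_nhds_unique (hlim.congr fun t => ?_) hσlim) one_ne_zero
    rw [hσ_eq t, show logit (σ t) = t from congr_fun h t]
  · rw [hσ_eq t, show logit (σ t) = -t from congr_fun h t, neg_neg]

end HilbertDist

local notation "ℝ²" => EuclideanSpace ℝ (Fin 2)

@[simp] lemma pt_apply_zero (a b : ℝ) : pt a b 0 = a := rfl
@[simp] lemma pt_apply_one (a b : ℝ) : pt a b 1 = b := rfl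

lemma eq_pt (z : ℝ²) : z = pt (z 0) (z 1) := by
  ext i; fin_cases i <;> rfl

lemma lineMap_pt (a b c d t : ℝ) :
    lineMap (pt a b) (pt c d) t = pt (a + t * (c - a)) (b + t * (d - b)) := by
  ext i; fin_cases i <;> simp [AffineMap.lineMap_apply_module'] <;> ring

def closedTrapezoid : Set ℝ² := {z | 0 ≤ z 1 ∧ z 1 ≤ 1 ∧ -1 - z 1 ≤ z 0 ∧ z 0 ≤ 2 + z 1}

def trapezoid : Set ℝ² := {z | 0 < z 1 ∧ z 1 < 1 ∧ -1 - z 1 < z 0 ∧ z 0 < 2 + z 1}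

lemma convex_closedTrapezoid : Convex ℝ closedTrapezoid := by
  rintro x ⟨hx₁, hx₂, hx₃, hx₄⟩ y ⟨hy₁, hy₂, hy₃, hy₄⟩ a b ha hb hab
  simp only [closedTrapezoid, mem_ofPred_eq, PiLp.add_apply, PiLp.smul_apply, smul_eq_mul]
  refine ⟨by positivity, by nlinarith, by nlinarith, by nlinarith⟩

lemma isClosed_closedTrapezoid : IsClosed closedTrapezoid := by
  simp only [closedTrapezoid, ofPred_and]
  refine .inter (isClosed_le ?_ ?_) (.inter (isClosed_le ?_ ?_)
    (.inter (isClosed_le ?_ ?_) (isClosed_le ?_ ?_))) <;> fun_prop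

lemma isOpen_trapezoid : IsOpen trapezoid := by
  simp only [trapezoid, ofPred_and]
  refine .inter (isOpen_lt ?_ ?_) (.inter (isOpen_lt ?_ ?_)
    (.inter (isOpen_lt ?_ ?_) (isOpen_lt ?_ ?_))) <;> fun_prop

lemma trapezoid_subset_closedTrapezoid : trapezoid ⊆ closedTrapezoid :=
  fun _ ⟨h₁, h₂, h₃, h₄⟩ => ⟨h₁.le, h₂.le, h₃.le, h₄.le⟩

lemma convexHull_trapezoidVertices :
    convexHull ℝ {pt 2 0, pt 3 1, pt (-2) 1, pt (-1) 0} = closedTrapezoid := by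
  refine subset_antisymm (convexHull_min ?_ convex_closedTrapezoid) fun z ⟨h₁, h₂, h₃, h₄⟩ => ?_
  · rintro z (rfl | rfl | rfl | rfl) <;> norm_num [closedTrapezoid]
  have hK := convex_convexHull ℝ ({pt 2 0, pt 3 1, pt (-2) 1, pt (-1) 0} : Set ℝ²)
  have hv : ∀ v ∈ ({pt 2 0, pt 3 1, pt (-2) 1, pt (-1) 0} : Set ℝ²),
      v ∈ convexHull ℝ {pt 2 0, pt 3 1, pt (-2) 1, pt (-1) 0} :=
    fun v hv => subset_convexHull ℝ _ hv
  -- `z` lies on the horizontal segment joining the two legs at height `z 1`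
  have hleft := hK.lineMap_mem (hv (pt (-1) 0) (by simp)) (hv (pt (-2) 1) (by simp)) ⟨h₁, h₂⟩
  have hright := hK.lineMap_mem (hv (pt 2 0) (by simp)) (hv (pt 3 1) (by simp)) ⟨h₁, h₂⟩
  have hden : 0 < 3 + 2 * z 1 := by linarith
  have hz := hK.lineMap_mem hleft hright (t := (z 0 + 1 + z 1) / (3 + 2 * z 1))
    ⟨by apply div_nonneg <;> linarith, by rw [div_le_one hden]; linarith⟩
  convert hz using 1
  conv_lhs => rw [eq_pt z]
  rw [lineMap_pt, lineMap_pt, lineMap_pt]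
  congr 1 <;> field_simp <;> ring

lemma interior_closedTrapezoid : interior closedTrapezoid = trapezoid := by
  refine subset_antisymm (fun z hz => ?_)
    (interior_maximal trapezoid_subset_closedTrapezoid isOpen_trapezoid)
  obtain ⟨ε, hε, hball⟩ := Metric.isOpen_iff.1 isOpen_interior z hz
  have shift : ∀ a b : ℝ, |a| + |b| < ε → pt (z 0 + a) (z 1 + b) ∈ closedTrapezoid := by
    intro a b hab
    refine interior_subset (hball ?_)
    rw [mem_ball, EuclideanSpace.dist_eq, Fin.sum_univ_two]
    simp only [pt_apply_zero, pt_apply_one, Real.dist_eq, add_sub_cancel_left, sq_abs]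
    refine lt_of_le_of_lt (Real.sqrt_le_iff.2 ⟨by positivity, ?_⟩) hab
    nlinarith [abs_nonneg a, abs_nonneg b, sq_abs a, sq_abs b]
  have hδ : |ε / 2| < ε := by rw [abs_of_pos (half_pos hε)]; linarith
  obtain ⟨-, -, h₃, -⟩ := shift (-(ε / 2)) 0 (by simpa using hδ)
  obtain ⟨-, -, -, h₄⟩ := shift (ε / 2) 0 (by simpa using hδ)
  obtain ⟨h₁, -, -, -⟩ := shift 0 (-(ε / 2)) (by simpa using hδ)
  obtain ⟨-, h₂, -, -⟩ := shift 0 (ε / 2) (by simpa using hδ)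
  simp only [pt_apply_zero, pt_apply_one] at h₁ h₂ h₃ h₄
  exact ⟨by linarith, by linarith, by linarith, by linarith⟩

lemma closure_trapezoid : closure trapezoid = closedTrapezoid := by
  have hne : (interior closedTrapezoid).Nonempty :=
    ⟨pt (1 / 2) (1 / 2), by norm_num [interior_closedTrapezoid, trapezoid]⟩
  rw [← interior_closedTrapezoid,
    convex_closedTrapezoid.closure_interior_eq_closure_of_nonempty_interior hne,
    isClosed_closedTrapezoid.closure_eq]

lemma convex_trapezoid : Convex ℝ trapezoid :=
  interior_closedTrapezoid ▸ convex_closedTrapezoid.interior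

lemma mem_frontier_trapezoid {z : ℝ²} :
    z ∈ frontier trapezoid ↔ z ∈ closedTrapezoid ∧ z ∉ trapezoid := by
  rw [isOpen_trapezoid.frontier_eq, closure_trapezoid]
  rfl

lemma IsGeodesicLine.eq_pt_of_trapezoid_diagonal {f : ℝ → ℝ²}
    (hf : IsGeodesicLine trapezoid f)
    (him : range f = trapezoid ∩ {z | z 1 = z 0}) (h₀ : f 0 = pt (1 / 2) (1 / 2))
    (hlim : Tendsto f atTop (𝓝 (pt 0 0))) (t : ℝ) :
    f t = pt (1 + exp t)⁻¹ (1 + exp t)⁻¹ := by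
  have hft : ∀ t, f t ∈ trapezoid ∩ {z | z 1 = z 0} := fun t => him ▸ mem_range_self (f := f) t
  have hfσ : ∀ t, f t = lineMap (pt 0 0) (pt 1 1) (f t 1) := fun t => by
    conv_lhs => rw [eq_pt (f t)]
    rw [lineMap_pt, (hft t).2]
    congr 1 <;> ring
  have hσ := hf.eq_inv_one_add_exp convex_trapezoid isOpen_trapezoid
    (mem_frontier_trapezoid.2 (by norm_num [closedTrapezoid, trapezoid]))
    (mem_frontier_trapezoid.2 (by norm_num [closedTrapezoid, trapezoid])) hfσ
    (fun t => ⟨(hft t).1.1, (hft t).1.2.1⟩) (by rw [h₀, pt_apply_one])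
    (((PiLp.continuous_apply 2 _ 1).tendsto _).comp hlim) t
  rw [hfσ t, hσ, lineMap_pt]
  congr 1 <;> ring

lemma IsGeodesicLine.eq_pt_of_trapezoid_antidiagonal {g : ℝ → ℝ²}
    (hg : IsGeodesicLine trapezoid g)
    (him : range g = trapezoid ∩ {z | z 1 = -z 0 + 1}) (h₀ : g 0 = pt (1 / 2) (1 / 2))
    (hlim : Tendsto g atTop (𝓝 (pt 1 0))) (t : ℝ) :
    g t = pt (1 - (1 + exp t)⁻¹) (1 + exp t)⁻¹ := by
  have hgt : ∀ t, g t ∈ trapezoid ∩ {z | z 1 = -z 0 + 1} :=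
    fun t => him ▸ mem_range_self (f := g) t
  have hgσ : ∀ t, g t = lineMap (pt 1 0) (pt 0 1) (g t 1) := fun t => by
    conv_lhs => rw [eq_pt (g t)]
    rw [lineMap_pt, (hgt t).2]
    congr 1 <;> ring
  have hσ := hg.eq_inv_one_add_exp convex_trapezoid isOpen_trapezoid
    (mem_frontier_trapezoid.2 (by norm_num [closedTrapezoid, trapezoid]))
    (mem_frontier_trapezoid.2 (by norm_num [closedTrapezoid, trapezoid])) hgσ
    (fun t => ⟨(hgt t).1.1, (hgt t).1.2.1⟩) (by rw [h₀, pt_apply_one])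
    (((PiLp.continuous_apply 2 _ 1).tendsto _).comp hlim) t
  rw [hgσ t, hσ, lineMap_pt]
  congr 1 <;> ring

lemma hilbertDist_trapezoid_horizontal {s : ℝ} (h₀ : 0 < s) (h₁ : s < 1 / 2) :
    hilbertDist trapezoid (pt s s) (pt (1 - s) s) = 2 * log (2 / (1 + 2 * s)) := by
  have hden : 0 < 3 + 2 * s := by linarith
  have hp : pt s s = lineMap (pt (-1 - s) s) (pt (2 + s) s) ((1 + 2 * s) / (3 + 2 * s)) := by
    rw [lineMap_pt]
    congr 1 <;> field_simp <;> ring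
  have hq : pt (1 - s) s = lineMap (pt (-1 - s) s) (pt (2 + s) s) (2 / (3 + 2 * s)) := by
    rw [lineMap_pt]
    congr 1 <;> field_simp <;> ring
  have hs : s < 1 := by linarith
  have hclosed : ∀ x, -1 - s ≤ x → x ≤ 2 + s → pt x s ∈ closedTrapezoid :=
    fun x hx₁ hx₂ => ⟨h₀.le, hs.le, hx₁, hx₂⟩
  have hopen : ∀ x, -1 - s < x → x < 2 + s → pt x s ∈ trapezoid :=
    fun x hx₁ hx₂ => ⟨h₀, hs, hx₁, hx₂⟩
  rw [hp, hq, hilbertDist_lineMap_of_lt convex_trapezoid isOpen_trapezoid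
    (mem_frontier_trapezoid.2 ⟨hclosed _ le_rfl (by linarith), fun h => lt_irrefl _ h.2.2.1⟩)
    (mem_frontier_trapezoid.2 ⟨hclosed _ (by linarith) le_rfl, fun h => lt_irrefl _ h.2.2.2⟩)
    (by positivity) ((div_lt_div_iff_of_pos_right hden).2 (by linarith))
    ((div_lt_one hden).2 (by linarith)) (hp ▸ hopen s (by linarith) (by linarith))
    (hq ▸ hopen (1 - s) (by linarith) (by linarith)), logit, logit]
  have e₁ : 2 / (3 + 2 * s) / (1 - 2 / (3 + 2 * s)) = 2 / (1 + 2 * s) := by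
    rw [one_sub_div hden.ne', div_div_div_cancel_right₀ hden.ne']
    congr 1; ring
  have e₂ :
      (1 + 2 * s) / (3 + 2 * s) / (1 - (1 + 2 * s) / (3 + 2 * s)) = (2 / (1 + 2 * s))⁻¹ := by
    rw [one_sub_div hden.ne', div_div_div_cancel_right₀ hden.ne', inv_div]
    congr 1; ring
  rw [e₁, e₂, log_inv]
  ring

theorem trapezoid_intersecting_geodesics_not_eventually_convex
    (Ω : Set (EuclideanSpace ℝ (Fin 2)))
    (hΩ : Ω = interior (convexHull ℝ
      ({pt 2 0, pt 3 1, pt (-2) 1, pt (-1) 0} : Set (EuclideanSpace ℝ (Fin 2)))))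
    (f g : ℝ → EuclideanSpace ℝ (Fin 2))
    (hf : IsGeodesicLine Ω f) (hg : IsGeodesicLine Ω g)
    (hfim : Set.range f = Ω ∩ {z : EuclideanSpace ℝ (Fin 2) | z 1 = z 0})
    (hf0 : f 0 = pt (1 / 2) (1 / 2))
    (hflim : Filter.Tendsto f Filter.atTop (nhds (pt 0 0)))
    (hgim : Set.range g = Ω ∩ {z : EuclideanSpace ℝ (Fin 2) | z 1 = -z 0 + 1})
    (hg0 : g 0 = pt (1 / 2) (1 / 2))
    (hglim : Filter.Tendsto g Filter.atTop (nhds (pt 1 0))) :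
    ∀ T : ℝ, ¬ ConvexOn ℝ (Set.Ici T) (fun t => hilbertDist Ω (f t) (g t)) := by
  rw [convexHull_trapezoidVertices, interior_closedTrapezoid] at hΩ
  subst hΩ
  intro T hconv
  set w : ℝ → ℝ := fun t => (1 + exp t)⁻¹
  set φ : ℝ → ℝ := fun s => 2 * log (2 / (1 + 2 * s))
  have hw : ∀ t, w t ∈ Ici 0 := fun t => mem_Ici.2 (by positivity)
  have hD : ∀ t, 0 < t → hilbertDist trapezoid (f t) (g t) = φ (w t) := fun t ht => by
    rw [hf.eq_pt_of_trapezoid_diagonal hfim hf0 hflim,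
      hg.eq_pt_of_trapezoid_antidiagonal hgim hg0 hglim]
    refine hilbertDist_trapezoid_horizontal (by positivity) ?_
    simpa [w, one_add_one_eq_two] using strictAnti_inv_one_add_exp ht
  obtain ⟨a, hTa, ha⟩ : ∃ a, T ≤ a ∧ 0 < a :=
    ⟨max T 0 + 1, by linarith [le_max_left T 0], by positivity⟩
  have hlt : hilbertDist trapezoid (f a) (g a) < hilbertDist trapezoid (f (a + 1)) (g (a + 1)) := by
    rw [hD a ha, hD (a + 1) (by linarith)]
    exact strictAntiOn_two_mul_log_two_div (hw _) (hw _) (strictAnti_inv_one_add_exp (lt_add_one a))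
  obtain ⟨t, ht, ht₀⟩ := ((hconv.tendsto_atTop_of_lt hTa (lt_add_one a) hlt).eventually_ge_atTop
    (φ 0)).and (eventually_gt_atTop 0) |>.exists
  rw [hD t ht₀] at ht
  exact (strictAntiOn_two_mul_log_two_div (mem_Ici.2 le_rfl) (hw t) (by positivity)).not_ge ht
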